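/- arXiv:2111.13252 — 2 statements merged into one kernel-verified Lean document; each statement's English description precedes it below -/
import Mathlib

section
/- Gilbert–Varshamov bound for permutation codes: for all n ≥ 1 and 1 ≤ d ≤ n, there exists a permutation code PA(n,d) of size at least n! / (Σ_{k=0}^{d−1} C(n,k)·D_k); i.e., M(n,d) · Σ_{k=0}^{d−1} C(n,k)·D_k ≥ n!. -/
/-!
Take a maximal set `P` of permutations with pairwise Hamming distance at least `d`. By maximality
the Hamming balls of radius `d - 1` around its members cover `S_n`, so `n! ≤ |P| · V` with `V` the
size of a ball. By left invariance of the Hamming distance every ball has the size of the ball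
around the identity, and a permutation at distance `k` from the identity is a derangement of its
`k`-element support, so `V = ∑_{k < d} C(n, k) D_k`.
-/

open Finset Equiv

namespace Equiv.Perm

variable {α : Type*} [Fintype α] [DecidableEq α]

theorem card_filter_support_eq (S : Finset α) :
    #{σ : Perm α | σ.support = S} = numDerangements #S := by
  rw [← Fintype.card_subtype, ← Fintype.card_coe S, ← card_derangements_eq_numDerangements]
  refine Fintype.card_congr ((derangements.subtypeEquiv (· ∈ S)).trans
    (subtypeEquivRight fun σ => ?_)).symm
  simp only [Finset.ext_iff, mem_support, Function.mem_fixedPoints, Function.IsFixedPt]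
  exact forall_congr' fun a => by tauto

theorem card_filter_card_support_eq (k : ℕ) :
    #{σ : Perm α | #σ.support = k} = (Fintype.card α).choose k * numDerangements k := by
  calc #{σ : Perm α | #σ.support = k}
      = ∑ S ∈ powersetCard k univ, #{σ : Perm α | σ.support = S} := by
        rw [card_eq_sum_card_fiberwise (f := support) (t := powersetCard k univ)
          (fun σ hσ => by simpa using hσ)]
        refine sum_congr rfl fun S hS => ?_
        rw [filter_filter]
        refine congrArg card (filter_congr fun σ _ => ?_)
        rw [mem_powersetCard_univ] at hS
        exact ⟨And.right, fun h => ⟨h ▸ hS, h⟩⟩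
    _ = ∑ S ∈ powersetCard k (univ : Finset α), numDerangements k :=
        sum_congr rfl fun S hS => by
          rw [card_filter_support_eq, (mem_powersetCard_univ.mp hS)]
    _ = (Fintype.card α).choose k * numDerangements k := by
        rw [sum_const, card_powersetCard, card_univ, smul_eq_mul]

theorem hammingDist_eq_card_support_inv_mul (π τ : Perm α) :
    hammingDist ⇑π ⇑τ = #(π⁻¹ * τ).support := by
  unfold hammingDist
  congr 1
  ext x
  simp only [mem_filter, mem_univ, true_and, mem_support, Perm.mul_apply,
    ne_eq, Perm.inv_eq_iff_eq]
  exact ne_comm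

theorem card_filter_hammingDist_lt (π : Perm α) (d : ℕ) :
    #{τ : Perm α | hammingDist ⇑π ⇑τ < d}
      = ∑ k ∈ range d, (Fintype.card α).choose k * numDerangements k := by
  calc #{τ : Perm α | hammingDist ⇑π ⇑τ < d}
      = #{σ : Perm α | #σ.support < d} := by
        refine card_equiv (Equiv.mulLeft π⁻¹) fun τ => ?_
        simp [hammingDist_eq_card_support_inv_mul]
    _ = ∑ k ∈ range d, #{σ : Perm α | #σ.support = k} := by
        rw [card_eq_sum_card_fiberwise (f := fun σ : Perm α => #σ.support) (t := range d)
          (fun σ hσ => by simpa using hσ)]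
        refine sum_congr rfl fun k hk => ?_
        rw [filter_filter]
        refine congrArg card (filter_congr fun σ _ => ?_)
        rw [mem_range] at hk
        exact ⟨And.right, fun h => ⟨h ▸ hk, h⟩⟩
    _ = _ := sum_congr rfl fun k _ => card_filter_card_support_eq k

end Equiv.Perm

theorem exists_separated_covering_finset {α : Type*} [Fintype α] (R : α → α → Prop)
    (hrefl : ∀ x, R x x) (hsymm : ∀ x y, R x y → R y x) :
    ∃ P : Finset α, (∀ x ∈ P, ∀ y ∈ P, x ≠ y → ¬R x y) ∧ ∀ y, ∃ x ∈ P, R x y := by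
  classical
  let separated : Finset α → Prop := fun P => ∀ x ∈ P, ∀ y ∈ P, x ≠ y → ¬R x y
  obtain ⟨P, hP, hmax⟩ :=
    exists_max_image {P : Finset α | separated P} card ⟨∅, by simp [separated]⟩
  rw [mem_filter] at hP
  refine ⟨P, hP.2, fun y => ?_⟩
  by_contra! hfar
  have hyP : y ∉ P := fun hy => hfar y hy (hrefl y)
  have hsep : separated (insert y P) := by
    simp only [separated, mem_insert]
    rintro x (rfl | hx) z (rfl | hz) hne
    · exact absurd rfl hne
    · exact fun h => hfar z hz (hsymm _ _ h)
    · exact hfar x hx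
    · exact hP.2 x hx z hz hne
  have hcard := hmax (insert y P) (by simpa using hsep)
  rw [card_insert_of_notMem hyP] at hcard
  omega

theorem gilbert_varshamov_perm_general (n d : ℕ) (hd : 1 ≤ d) :
    ∃ P : Finset (Equiv.Perm (Fin n)),
      (∀ π ∈ P, ∀ σ ∈ P, π ≠ σ → d ≤ hammingDist ⇑π ⇑σ) ∧
      Nat.factorial n ≤ P.card * ∑ k ∈ Finset.range d, Nat.choose n k * numDerangements k := by
  obtain ⟨P, hsep, hcover⟩ := exists_separated_covering_finset
    (fun π τ : Perm (Fin n) => hammingDist ⇑π ⇑τ < d)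
    (fun π => by rw [hammingDist_self]; exact hd) (fun π τ h => hammingDist_comm (⇑π) τ ▸ h)
  refine ⟨P, fun π hπ σ hσ hne => not_lt.mp (hsep π hπ σ hσ hne), ?_⟩
  have hball : univ ⊆ P.biUnion fun π => {τ : Perm (Fin n) | hammingDist ⇑π ⇑τ < d} :=
    fun τ _ => by simpa using hcover τ
  calc n.factorial = #(univ : Finset (Perm (Fin n))) := by
        rw [card_univ, Fintype.card_perm, Fintype.card_fin]
    _ ≤ _ := card_le_card hball
    _ ≤ _ := card_biUnion_le_card_mul _ _ _ fun π _ => by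
        rw [Perm.card_filter_hammingDist_lt, Fintype.card_fin]

theorem gilbert_varshamov_perm (n d : ℕ) (hd : 1 ≤ d) (hdn : d ≤ n) :
    ∃ P : Finset (Equiv.Perm (Fin n)),
      (∀ π ∈ P, ∀ σ ∈ P, π ≠ σ → d ≤ hammingDist ⇑π ⇑σ) ∧
      Nat.factorial n ≤ P.card * ∑ k ∈ Finset.range d, Nat.choose n k * numDerangements k :=
  gilbert_varshamov_perm_general n d hd
end

section
/- If there exist k mutually orthogonal Latin squares of order n, then there exists a permutation code of length n with minimum distance n−1 containing kn permutations; hence kn ≤ M(n, n−1). -/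
/-- `L` is a Latin square of order `n`: every row and every column is a bijection. -/
def IsLatinSquare {n : ℕ} (L : Fin n → Fin n → Fin n) : Prop :=
  (∀ i, Function.Bijective (L i)) ∧ (∀ j, Function.Bijective fun i => L i j)

/-- Two Latin squares are orthogonal: their superposition yields all ordered pairs. -/
def AreOrthogonal {n : ℕ} (L L' : Fin n → Fin n → Fin n) : Prop :=
  Function.Bijective fun p : Fin n × Fin n => (L p.1 p.2, L' p.1 p.2)

theorem mols_to_permutation_code (n k : ℕ) (L : Fin k → Fin n → Fin n → Fin n)
    (hLatin : ∀ s, IsLatinSquare (L s))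
    (hOrth : ∀ s t, s ≠ t → AreOrthogonal (L s) (L t))
    (hDist : Function.Injective L) :
    ∃ P : Finset (Equiv.Perm (Fin n)),
      (∀ π ∈ P, ∀ σ ∈ P, π ≠ σ → n - 1 ≤ hammingDist ⇑π ⇑σ) ∧
      P.card = k * n := by
  classical
  rcases Nat.eq_zero_or_pos n with hn | hn
  · subst hn
    exact ⟨∅, by simp, by simp⟩
  have i0 : Fin n := ⟨0, hn⟩
  have hrow : ∀ s i, Function.Bijective (L s i) := fun s i => (hLatin s).1 i
  have hcol : ∀ s j, Function.Bijective (fun i => L s i j) := fun s j => (hLatin s).2 j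
  -- g s c i : the column j with L s i j = c
  set g : Fin k → Fin n → Fin n → Fin n :=
    fun s c i => (Equiv.ofBijective _ (hrow s i)).symm c with hg
  have hgspec : ∀ s c i, L s i (g s c i) = c := by
    intro s c i
    exact (Equiv.ofBijective _ (hrow s i)).apply_symm_apply c
  have hguniq : ∀ s c i j, L s i j = c → g s c i = j := by
    intro s c i j hj
    exact (hrow s i).1 (by rw [hgspec, hj])
  have hgbij : ∀ s c, Function.Bijective (g s c) := by
    intro s c
    constructor
    · intro i i' h
      exact (hcol s (g s c i)).1 (show L s i (g s c i) = L s i' (g s c i) by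
        rw [hgspec, h, hgspec])
    · intro j
      obtain ⟨i, hi⟩ := (hcol s j).2 c
      exact ⟨i, hguniq s c i j hi⟩
  -- agreement lemma across distinct squares
  have hagree : ∀ s t c c', s ≠ t → ∀ i i', g s c i = g t c' i → g s c i' = g t c' i' →
      i = i' := by
    intro s t c c' hst i i' h1 h2
    have key : ∀ a : Fin n, g s c a = g t c' a →
        (fun p : Fin n × Fin n => (L s p.1 p.2, L t p.1 p.2)) (a, g s c a) = (c, c') := by
      intro a ha
      simp only
      rw [hgspec]
      congr 1
      rw [ha, hgspec]
    have := (hOrth s t hst).1 ((key i h1).trans (key i' h2).symm)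
    exact congrArg Prod.fst this
  set f : Fin k × Fin n → Equiv.Perm (Fin n) :=
    fun p => Equiv.ofBijective (g p.1 p.2) (hgbij p.1 p.2) with hf
  have hfcoe : ∀ p, ⇑(f p) = g p.1 p.2 := fun p => rfl
  have hfinj : Function.Injective f := by
    intro ⟨s, c⟩ ⟨t, c'⟩ h
    have hgg : g s c = g t c' := by
      rw [← hfcoe ⟨s, c⟩, ← hfcoe ⟨t, c'⟩, h]
    by_cases hst : s = t
    · subst hst
      have : L s i0 (g s c i0) = L s i0 (g s c' i0) := by rw [hgg]
      rw [hgspec, hgspec] at this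
      simp [this]
    · -- all points agree, so Fin n is a subsingleton, so n ≤ 1, then L s = L t
      exfalso
      have hsub : ∀ a b : Fin n, a = b := by
        intro a b
        exact hagree s t c c' hst a b (by rw [hgg]) (by rw [hgg])
      have hLst : L s = L t := by
        funext i j
        exact hsub _ _
      exact hst (hDist hLst)
  refine ⟨Finset.image f Finset.univ, ?_, ?_⟩
  · intro π hπ σ hσ hne
    obtain ⟨⟨s, c⟩, _, rfl⟩ := Finset.mem_image.mp hπ
    obtain ⟨⟨t, c'⟩, _, rfl⟩ := Finset.mem_image.mp hσ
    have hA : (Finset.univ.filter fun i => f (s, c) i = f (t, c') i).card ≤ 1 := by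
      apply Finset.card_le_one.mpr
      intro a ha b hb
      simp only [Finset.mem_filter, hfcoe] at ha hb
      by_cases hst : s = t
      · subst hst
        exfalso
        have hcc : c ≠ c' := fun h => hne (by rw [h])
        have : L s a (g s c a) = L s a (g s c' a) := by rw [ha.2]
        rw [hgspec, hgspec] at this
        exact hcc this
      · exact hagree s t c c' hst a b ha.2 hb.2
    have hsplit := Finset.card_filter_add_card_filter_not
      (s := (Finset.univ : Finset (Fin n))) (p := fun i => f (s, c) i = f (t, c') i)
    have hd : hammingDist ⇑(f (s, c)) ⇑(f (t, c')) =
        (Finset.univ.filter fun i => ¬ f (s, c) i = f (t, c') i).card := rfl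
    rw [hd]
    simp only [Finset.card_univ, Fintype.card_fin] at hsplit
    omega
  · rw [Finset.card_image_of_injective _ hfinj]
    simp [mul_comm]
end
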